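/- Alternative combinatorial sum: for n = rk + m with m ∈ {1,...,k} and r ≥ 1, the pmf of the Poisson distribution of order k satisfies p_n = e^{-kλ} [ Σ_{j=r+1}^{n} C(n-1, j-1) λ^j/j! − Σ_{i=1}^{r} (−1)^{i−1} (λ^i/i!) Σ_{j=r+1−i}^{n−ik−1} C(n − ik − 1, j + i − 1) λ^j/j! ], where any sum whose lower limit exceeds its upper limit is zero. -/

import Mathlib

open Finset

/-- The polynomial part of the pmf of the Poisson distribution of order `k`:
`P k n x = ∑_{n₁+2n₂+⋯+k·n_k = n} x^{n₁+⋯+n_k} / (n₁!⋯n_k!)`. -/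
noncomputable def poissonOrderKSum (k n : ℕ) (x : ℝ) : ℝ :=
  ∑ f ∈ ((Fintype.piFinset fun _ : Fin k => Finset.range (n + 1)).filter
      fun f => ∑ i : Fin k, (i.1 + 1) * f i = n),
    x ^ (∑ i : Fin k, f i) / ∏ i : Fin k, (Nat.factorial (f i) : ℝ)

/-! Grouping the tuples `(n₁, …, n_k)` by `j = n₁ + ⋯ + n_k`, the multinomial theorem gives
`P = ∑ⱼ [Xⁿ] (X + ⋯ + X^k)^j · x^j / j!`. Since `X + ⋯ + X^k = X (1 - X^k) / (1 - X)`, expanding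
`(1 - X^k)^j` binomially and `(1 - X)^(-j)` as `∑_d C(d + j - 1, j - 1) X^d` gives
`[Xⁿ] (X + ⋯ + X^k)^j = ∑_{ik < n} (-1)^i C(j, i) C(n - ik - 1, j - 1)`, while the coefficient
vanishes for `jk < n` by degree. For `n = rk + m` with `1 ≤ m ≤ k`, `ik < n` holds iff `i ≤ r`, so
only `r < j ≤ n` and `i ≤ r` contribute; exchanging the two sums and using
`C(j, i) / j! = 1 / (i! (j - i)!)` gives the formula, whose first sum is the term `i = 0`. -/

open PowerSeries

noncomputable def partSeries (R : Type*) [CommSemiring R] (k : ℕ) : R⟦X⟧ :=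
  ∑ i : Fin k, X ^ (i.1 + 1)

def partWeight {k : ℕ} (g : Fin k → ℕ) : ℕ := ∑ i, (i.1 + 1) * g i

theorem sum_le_partWeight {k : ℕ} (g : Fin k → ℕ) : ∑ i, g i ≤ partWeight g :=
  sum_le_sum fun i _ => Nat.le_mul_of_pos_left _ i.1.succ_pos

theorem partWeight_le_sum_mul {k : ℕ} (g : Fin k → ℕ) :
    partWeight g ≤ (∑ i, g i) * k := by
  rw [sum_mul]
  exact sum_le_sum fun i _ => by rw [mul_comm]; exact Nat.mul_le_mul_left _ i.2

section CommSemiring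

variable {R : Type*} [CommSemiring R]

theorem coeff_partSeries_pow (k n j : ℕ) :
    coeff n (partSeries R k ^ j) =
      ∑ g ∈ (piAntidiag (univ : Finset (Fin k)) j).filter (partWeight · = n),
        (Nat.multinomial univ g : R) := by
  rw [partSeries, sum_pow_eq_sum_piAntidiag, map_sum, sum_filter]
  refine sum_congr rfl fun g _ => ?_
  have hX : ∏ i : Fin k, ((X : R⟦X⟧) ^ (i.1 + 1)) ^ g i = X ^ partWeight g := by
    simp_rw [← pow_mul, prod_pow_eq_pow_sum, partWeight]
  rw [hX, ← map_natCast (C (R := R)), coeff_C_mul, coeff_X_pow]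
  simp only [eq_comm (a := n), mul_ite, mul_one, mul_zero]

theorem coeff_partSeries_pow_of_mul_lt {k n j : ℕ} (h : j * k < n) :
    coeff n (partSeries R k ^ j) = 0 := by
  rw [coeff_partSeries_pow]
  refine sum_eq_zero fun g hg => absurd hg ?_
  simp only [mem_filter, mem_piAntidiag, not_and]
  rintro ⟨hsum, -⟩ rfl
  have := partWeight_le_sum_mul g
  rw [hsum] at this
  omega

end CommSemiring

theorem cast_multinomial_eq_factorial_div {K ι : Type*} [Field K] [CharZero K] (s : Finset ι)
    (g : ι → ℕ) :
    (Nat.multinomial s g : K) = (∑ i ∈ s, g i).factorial / ∏ i ∈ s, ((g i).factorial : K) := by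
  rw [eq_div_iff (prod_ne_zero_iff.2 fun i _ => Nat.cast_ne_zero.2 (Nat.factorial_ne_zero _)),
    mul_comm]
  exact_mod_cast Nat.multinomial_spec s g

theorem poissonOrderKSum_eq_sum_coeff (k n : ℕ) (x : ℝ) :
    poissonOrderKSum k n x =
      ∑ j ∈ range (n + 1), coeff n (partSeries ℝ k ^ j) * x ^ j / (j.factorial : ℝ) := by
  have hmaps : ∀ f ∈ (Fintype.piFinset fun _ : Fin k => range (n + 1)).filter
      (fun f => ∑ i : Fin k, (i.1 + 1) * f i = n), ∑ i, f i ∈ range (n + 1) :=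
    fun f hf => mem_range_succ_iff.2 ((mem_filter.1 hf).2 ▸ sum_le_partWeight f)
  rw [poissonOrderKSum, ← sum_fiberwise_of_maps_to hmaps]
  refine sum_congr rfl fun j _ => ?_
  rw [coeff_partSeries_pow, sum_mul, sum_div]
  refine sum_congr ?_ fun g hg => ?_
  · ext g
    simp only [mem_filter, Fintype.mem_piFinset, mem_range, mem_piAntidiag, mem_univ,
      implies_true, and_true]
    constructor
    · rintro ⟨⟨-, hw⟩, hs⟩
      exact ⟨hs, hw⟩
    · rintro ⟨hs, hw⟩
      refine ⟨⟨fun i => ?_, hw⟩, hs⟩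
      have := (single_le_sum (fun i _ => Nat.zero_le _) (mem_univ i)).trans
        (sum_le_partWeight g)
      omega
  · simp only [mem_filter, mem_piAntidiag] at hg
    rw [cast_multinomial_eq_factorial_div, hg.1.1]
    field_simp

section CommRing

variable {R : Type*} [CommRing R]

theorem partSeries_mul_one_sub (k : ℕ) :
    partSeries R k * (1 - X) = X - X ^ (k + 1) := by
  rw [partSeries, Fin.sum_univ_eq_sum_range (fun i => (X : R⟦X⟧) ^ (i + 1)), sum_mul]
  simp_rw [mul_sub, mul_one, ← pow_succ]
  rw [sum_range_sub']
  simp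

theorem partSeries_pow (k j : ℕ) :
    partSeries R k ^ j = X ^ j * (1 - X ^ k) ^ j * (invOneSubPow R j).val := by
  have hinv : (1 - X : R⟦X⟧) ^ j * (invOneSubPow R j).val = 1 := by
    rw [← invOneSubPow_inv_eq_one_sub_pow]
    exact (invOneSubPow R j).inv_val
  calc partSeries R k ^ j = (partSeries R k * (1 - X)) ^ j * (invOneSubPow R j).val := by
        rw [mul_pow, mul_assoc, hinv, mul_one]
    _ = _ := by rw [partSeries_mul_one_sub, ← mul_pow]; ring

theorem one_sub_X_pow_pow (k j : ℕ) :
    (1 - X ^ k : R⟦X⟧) ^ j =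
      ∑ i ∈ range (j + 1), C ((-1) ^ i * (j.choose i : R)) * X ^ (i * k) := by
  rw [sub_eq_neg_add, add_pow]
  refine sum_congr rfl fun i _ => ?_
  rw [one_pow, mul_one, neg_pow, ← pow_mul, map_mul, map_pow, map_neg, map_one, map_natCast,
    mul_comm k i]
  ring

/-- The filter `i * k < n` is needed: for `i * k ≥ n` the truncated `n - i * k - 1` is `0`, and
`C(0, j - 1) = 1` when `j = 1`. -/
theorem coeff_partSeries_pow_eq_sum {k n j : ℕ} (hj : 1 ≤ j) :
    coeff n (partSeries R k ^ j) =
      ∑ i ∈ (range (j + 1)).filter (· * k < n),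
        (-1) ^ i * (j.choose i : R) * ((n - i * k - 1).choose (j - 1) : R) := by
  rw [partSeries_pow, one_sub_X_pow_pow, mul_sum, sum_mul, map_sum, sum_filter]
  refine sum_congr rfl fun i _ => ?_
  rw [show X ^ j * (C ((-1) ^ i * (j.choose i : R)) * X ^ (i * k)) * (invOneSubPow R j).val
      = C ((-1) ^ i * (j.choose i : R)) * (X ^ (j + i * k) * (invOneSubPow R j).val) by ring,
    coeff_C_mul, coeff_X_pow_mul', invOneSubPow_val_eq_mk_sub_one_add_choose_of_pos R j hj,
    coeff_mk]
  split_ifs with hle hlt hlt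
  · congr 3
    omega
  · omega
  · rw [Nat.choose_eq_zero_of_lt (n := n - i * k - 1) (k := j - 1) (by omega), Nat.cast_zero,
      mul_zero]
  · rw [mul_zero]

end CommRing

theorem add_choose_mul_pow_div_factorial {K : Type*} [Field K] [CharZero K] (x : K) (i j : ℕ) :
    ((j + i).choose i : K) * x ^ (j + i) / (j + i).factorial =
      x ^ i / i.factorial * (x ^ j / j.factorial) := by
  have : ((i + j).factorial : K) ≠ 0 := Nat.cast_ne_zero.2 (Nat.factorial_ne_zero _)
  rw [add_comm j i, Nat.cast_add_choose, pow_add]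
  field_simp

theorem mul_lt_iff_le_of_eq_mul_add {k n r m i : ℕ} (hm1 : 1 ≤ m) (hmk : m ≤ k)
    (hn : n = r * k + m) : i * k < n ↔ i ≤ r := by
  constructor
  · intro h
    have : i * k < (r + 1) * k := by rw [add_mul, one_mul]; omega
    exact Nat.lt_succ_iff.1 (Nat.lt_of_mul_lt_mul_right this)
  · intro h
    have := Nat.mul_le_mul_right k h
    omega

theorem poissonOrderKSum_eq_sum_Icc_sum_range {k n r m : ℕ} (hm1 : 1 ≤ m) (hmk : m ≤ k)
    (hn : n = r * k + m) (x : ℝ) :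
    poissonOrderKSum k n x =
      ∑ j ∈ Icc (r + 1) n, ∑ i ∈ range (r + 1),
        (-1) ^ i *
          ((j.choose i : ℝ) * ((n - i * k - 1).choose (j - 1) : ℝ) * x ^ j / j.factorial) := by
  have hvanish : ∀ j ∈ range (n + 1), j ∉ Icc (r + 1) n →
      coeff n (partSeries ℝ k ^ j) * x ^ j / j.factorial = 0 := by
    intro j hj hj'
    simp only [mem_range, mem_Icc, not_and_or] at hj hj'
    have hjr : j * k < n := (mul_lt_iff_le_of_eq_mul_add hm1 hmk hn).2 (by omega)
    rw [coeff_partSeries_pow_of_mul_lt hjr, zero_mul, zero_div]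
  rw [poissonOrderKSum_eq_sum_coeff, ← sum_subset (fun j hj => ?_) hvanish]
  · refine sum_congr rfl fun j hj => ?_
    have hfilter : (range (j + 1)).filter (· * k < n) = range (r + 1) := by
      ext i
      simp only [mem_filter, mem_range, mul_lt_iff_le_of_eq_mul_add hm1 hmk hn, mem_Icc] at hj ⊢
      omega
    rw [coeff_partSeries_pow_eq_sum (by simp only [mem_Icc] at hj; omega), hfilter, sum_mul,
      sum_div]
    refine sum_congr rfl fun i _ => ?_
    ring
  · simp only [mem_Icc, mem_range] at hj ⊢
    omega

theorem sum_Icc_choose_mul_pow_div_factorial {K : Type*} [Field K] [CharZero K] (f : ℕ → K)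
    (x : K) {a b c : ℕ} (hca : c ≤ a) (hcb : c ≤ b) :
    ∑ j ∈ Icc a b, (j.choose c : K) * f j * x ^ j / j.factorial =
      x ^ c / c.factorial * ∑ j ∈ Icc (a - c) (b - c), f (j + c) * x ^ j / j.factorial := by
  have hIcc : (Icc (a - c) (b - c)).map (addRightEmbedding c) = Icc a b := by
    rw [map_add_right_Icc, Nat.sub_add_cancel hca, Nat.sub_add_cancel hcb]
  rw [← hIcc, sum_map, mul_sum]
  refine sum_congr rfl fun j _ => ?_
  rw [addRightEmbedding_apply]
  linear_combination f (j + c) * add_choose_mul_pow_div_factorial x c j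

theorem sum_Icc_choose_add_eq_of_le {K : Type*} [Field K] (x : K) {N a b i : ℕ} (hi : 1 ≤ i)
    (hN : N ≤ b) :
    ∑ j ∈ Icc a b, (N.choose (j + i - 1) : K) * x ^ j / j.factorial =
      ∑ j ∈ Icc a N, (N.choose (j + i - 1) : K) * x ^ j / j.factorial := by
  refine (sum_subset (Icc_subset_Icc_right hN) fun j hj hj' => ?_).symm
  simp only [mem_Icc, not_and_or, not_le] at hj hj'
  rw [Nat.choose_eq_zero_of_lt (by omega), Nat.cast_zero, zero_mul, zero_div]

theorem poissonOrderKSum_eq_alternating_sum {k n r m : ℕ} (hm1 : 1 ≤ m) (hmk : m ≤ k)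
    (hn : n = r * k + m) (x : ℝ) :
    poissonOrderKSum k n x =
      ∑ i ∈ range (r + 1), (-1) ^ i * (x ^ i / i.factorial *
        ∑ j ∈ Icc (r + 1 - i) (n - i),
          ((n - i * k - 1).choose (j + i - 1) : ℝ) * x ^ j / j.factorial) := by
  rw [poissonOrderKSum_eq_sum_Icc_sum_range hm1 hmk hn, sum_comm]
  refine sum_congr rfl fun i hi => ?_
  have hir : i ≤ r := mem_range_succ_iff.1 hi
  have hin : i ≤ n := hir.trans (by rw [hn]; nlinarith)
  rw [← mul_sum, sum_Icc_choose_mul_pow_div_factorial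
    (fun j => ((n - i * k - 1).choose (j - 1) : ℝ)) x (by omega) hin]

theorem poissonOrderK_alternative_formula_general (k n r m : ℕ)
    (hm1 : 1 ≤ m) (hmk : m ≤ k) (hn : n = r * k + m) (lam : ℝ) :
    Real.exp (-(k * lam)) * poissonOrderKSum k n lam =
      Real.exp (-(k * lam)) *
        ((∑ j ∈ Finset.Icc (r + 1) n,
            (Nat.choose (n - 1) (j - 1) : ℝ) * lam ^ j / (Nat.factorial j : ℝ))
          - ∑ i ∈ Finset.Icc 1 r, (-1 : ℝ) ^ (i - 1) * lam ^ i / (Nat.factorial i : ℝ) *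
              ∑ j ∈ Finset.Icc (r + 1 - i) (n - i * k - 1),
                (Nat.choose (n - i * k - 1) (j + i - 1) : ℝ) * lam ^ j /
                  (Nat.factorial j : ℝ)) := by
  have hrange : range (r + 1) = insert 0 (Icc 1 r) := by
    ext i
    simp only [mem_range, mem_insert, mem_Icc]
    omega
  rw [poissonOrderKSum_eq_alternating_sum hm1 hmk hn, hrange, sum_insert (by simp),
    sub_eq_add_neg, ← sum_neg_distrib]
  congr 2
  · simp
  · refine sum_congr rfl fun i hi => ?_
    obtain ⟨hi1, -⟩ := mem_Icc.1 hi
    have hsign : (-1 : ℝ) ^ i = -(-1) ^ (i - 1) := by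
      rw [← Nat.sub_add_cancel hi1, pow_succ, Nat.add_sub_cancel, mul_neg_one]
    have hNle : n - i * k - 1 ≤ n - i := by
      have := Nat.mul_le_mul_left i (hm1.trans hmk)
      omega
    rw [sum_Icc_choose_add_eq_of_le lam hi1 hNle, hsign]
    ring

theorem poissonOrderK_alternative_formula (k n r m : ℕ) (hk : 2 ≤ k) (hr : 1 ≤ r)
    (hm1 : 1 ≤ m) (hmk : m ≤ k) (hn : n = r * k + m) (lam : ℝ) (hlam : 0 < lam) :
    Real.exp (-(k * lam)) * poissonOrderKSum k n lam =
      Real.exp (-(k * lam)) *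
        ((∑ j ∈ Finset.Icc (r + 1) n,
            (Nat.choose (n - 1) (j - 1) : ℝ) * lam ^ j / (Nat.factorial j : ℝ))
          - ∑ i ∈ Finset.Icc 1 r, (-1 : ℝ) ^ (i - 1) * lam ^ i / (Nat.factorial i : ℝ) *
              ∑ j ∈ Finset.Icc (r + 1 - i) (n - i * k - 1),
                (Nat.choose (n - i * k - 1) (j + i - 1) : ℝ) * lam ^ j /
                  (Nat.factorial j : ℝ)) :=
  poissonOrderK_alternative_formula_general k n r m hm1 hmk hn lam
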